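/- Let V ~ N(0,1) be a standard Gaussian random variable and let σ > 0, a ≥ 0. Then E[V·tanh(aV)] ≤ a - a³ + 2·15·a⁵/15 = a - a³ + 2a⁵, using E[V²]=1, E[V⁴]=3, E[V⁶]=15. More precisely, E[V·tanh(aV)] ≤ (1/a)·E[(aV)² - (aV)⁴/3 + 2(aV)⁶/15] = a - a³ + 2a⁵ for a > 0. -/

import Mathlib

/-!
Since `tanh' = 1 - tanh ^ 2`, comparing derivatives on `[0, ∞)` gives in turn `0 ≤ tanh x ≤ x`,
`x - x ^ 3 / 3 ≤ tanh x` and `tanh x ≤ x - x ^ 3 / 3 + 2 * x ^ 5 / 15`; for the last one,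
`tanh x ^ 2 ≥ (x - x ^ 3 / 3) ^ 2 ≥ x ^ 2 - 2 * x ^ 4 / 3` where `x - x ^ 3 / 3 ≥ 0`, while
`x ^ 2 - 2 * x ^ 4 / 3 < 0` elsewhere. Multiplying by `x` and using parity gives the pointwise
bound `x * tanh x ≤ x ^ 2 - x ^ 4 / 3 + 2 * x ^ 6 / 15` on all of `ℝ`, which is integrated against
the standard Gaussian. The even Gaussian moments `E[V ^ (2k)] = v ^ k * (2k - 1)‼` come from the
Gamma integral.
-/

open MeasureTheory ProbabilityTheory
open Real Set
open scoped Nat NNReal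

theorem monotoneOn_Ici_of_hasDerivAt_nonneg {f f' : ℝ → ℝ} {a : ℝ}
    (hf : ∀ x, HasDerivAt f (f' x) x) (hf' : ∀ x, a < x → 0 ≤ f' x) :
    MonotoneOn f (Ici a) :=
  monotoneOn_of_hasDerivWithinAt_nonneg (convex_Ici a)
    (continuous_iff_continuousAt.2 fun x => (hf x).continuousAt).continuousOn
    (fun x _ => (hf x).hasDerivWithinAt) (fun x hx => hf' x (by simpa using hx))

namespace Real

theorem hasDerivAt_tanh (x : ℝ) : HasDerivAt tanh (1 - tanh x ^ 2) x := by
  have h := (hasDerivAt_sinh x).div (hasDerivAt_cosh x) (cosh_pos x).ne'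
  rw [show tanh = sinh / cosh from funext tanh_eq_sinh_div_cosh]
  refine h.congr_deriv ?_
  simp only [Pi.div_apply]
  field_simp

theorem tanh_nonneg {x : ℝ} (hx : 0 ≤ x) : 0 ≤ tanh x := by
  simpa using monotoneOn_Ici_of_hasDerivAt_nonneg hasDerivAt_tanh
    (fun y _ => by nlinarith [tanh_sq_lt_one y]) self_mem_Ici hx hx

theorem tanh_le_self {x : ℝ} (hx : 0 ≤ x) : tanh x ≤ x := by
  have h : 0 - tanh 0 ≤ x - tanh x :=
    monotoneOn_Ici_of_hasDerivAt_nonneg (f := fun y => y - tanh y)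
      (fun y => ((hasDerivAt_id y).sub (hasDerivAt_tanh y)).congr_deriv (by simp))
      (fun y _ => sq_nonneg (tanh y)) self_mem_Ici hx hx
  rw [tanh_zero] at h
  linarith

theorem self_sub_pow_three_div_three_le_tanh {x : ℝ} (hx : 0 ≤ x) : x - x ^ 3 / 3 ≤ tanh x := by
  have h : tanh 0 - (0 - 0 ^ 3 / 3) ≤ tanh x - (x - x ^ 3 / 3) :=
    monotoneOn_Ici_of_hasDerivAt_nonneg
      (f := fun y => tanh y - (y - y ^ 3 / 3)) (f' := fun y => y ^ 2 - tanh y ^ 2)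
      (fun y => ((hasDerivAt_tanh y).sub
        ((hasDerivAt_id y).sub ((hasDerivAt_pow 3 y).div_const 3))).congr_deriv (by simp))
      (fun y hy => by nlinarith [tanh_nonneg hy.le, tanh_le_self hy.le]) self_mem_Ici hx hx
  rw [tanh_zero] at h
  linarith

theorem tanh_le_self_sub_pow_three_div_three_add_pow_five {x : ℝ} (hx : 0 ≤ x) :
    tanh x ≤ x - x ^ 3 / 3 + 2 * x ^ 5 / 15 := by
  have htanh_sq : ∀ y, 0 < y → y ^ 2 - 2 * y ^ 4 / 3 ≤ tanh y ^ 2 := fun y hy => by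
    rcases le_total 0 (y - y ^ 3 / 3) with hcube | hcube
    · nlinarith [pow_le_pow_left₀ hcube (self_sub_pow_three_div_three_le_tanh hy.le) 2,
        pow_nonneg hy.le 6]
    · nlinarith [sq_nonneg (tanh y)]
  have h : 0 - 0 ^ 3 / 3 + 2 * 0 ^ 5 / 15 - tanh 0 ≤ x - x ^ 3 / 3 + 2 * x ^ 5 / 15 - tanh x :=
    monotoneOn_Ici_of_hasDerivAt_nonneg
      (f := fun y => y - y ^ 3 / 3 + 2 * y ^ 5 / 15 - tanh y)
      (f' := fun y => tanh y ^ 2 - (y ^ 2 - 2 * y ^ 4 / 3))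
      (fun y => ((((hasDerivAt_id y).sub ((hasDerivAt_pow 3 y).div_const 3)).add
        (((hasDerivAt_pow 5 y).const_mul 2).div_const 15)).sub (hasDerivAt_tanh y)).congr_deriv
          (by simp only [Nat.cast_ofNat, Nat.add_one_sub_one]; ring))
      (fun y hy => sub_nonneg.2 (htanh_sq y hy)) self_mem_Ici hx hx
  rw [tanh_zero] at h
  linarith

theorem mul_tanh_abs (x : ℝ) : |x| * tanh |x| = x * tanh x := by
  rcases abs_cases x with ⟨h, -⟩ | ⟨h, -⟩ <;> simp [h, tanh_neg]

theorem mul_tanh_nonneg (x : ℝ) : 0 ≤ x * tanh x := by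
  rw [← mul_tanh_abs]
  exact mul_nonneg (abs_nonneg x) (tanh_nonneg (abs_nonneg x))

theorem mul_tanh_le (x : ℝ) : x * tanh x ≤ x ^ 2 - x ^ 4 / 3 + 2 * x ^ 6 / 15 := by
  have h := mul_le_mul_of_nonneg_left
    (tanh_le_self_sub_pow_three_div_three_add_pow_five (abs_nonneg x)) (abs_nonneg x)
  rw [mul_tanh_abs] at h
  have h4 : |x| ^ 4 = x ^ 4 := (even_two_mul 2).pow_abs x
  have h6 : |x| ^ 6 = x ^ 6 := (even_two_mul 3).pow_abs x
  calc x * tanh x ≤ |x| * (|x| - |x| ^ 3 / 3 + 2 * |x| ^ 5 / 15) := h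
    _ = x ^ 2 - x ^ 4 / 3 + 2 * x ^ 6 / 15 := by rw [← sq_abs x, ← h4, ← h6]; ring

end Real

theorem integrable_pow_gaussianReal (μ : ℝ) (v : ℝ≥0) (n : ℕ) :
    Integrable (fun x => x ^ n) (gaussianReal μ v) :=
  integrable_pow_of_mem_interior_integrableExpSet (by simp) n

theorem integral_Ioi_pow_two_mul_mul_exp_neg_mul_sq {b : ℝ} (hb : 0 < b) (k : ℕ) :
    ∫ x in Ioi 0, x ^ (2 * k) * exp (-b * x ^ 2) =
      b ^ (-((2 * k + 1 : ℝ) / 2)) * (1 / 2) * Gamma (k + 1 / 2) := by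
  have h := integral_rpow_mul_exp_neg_mul_rpow zero_lt_two
    (neg_one_lt_zero.trans_le (Nat.cast_nonneg (2 * k))) hb
  simp only [rpow_natCast, rpow_two] at h
  rw [h]
  push_cast
  ring_nf

theorem integral_pow_two_mul_gaussianReal (v : ℝ≥0) (k : ℕ) :
    ∫ x, x ^ (2 * k) ∂gaussianReal 0 v = v ^ k * (2 * k - 1 : ℕ)‼ := by
  rcases eq_or_ne v 0 with rfl | hv
  · cases k <;> simp [gaussianReal_zero_var]
  set f : ℝ → ℝ := fun t => t ^ (2 * k) * exp (-(2 * v : ℝ)⁻¹ * t ^ 2)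
  have heven : (fun x => gaussianPDFReal 0 v x • x ^ (2 * k)) =
      fun x => (√(2 * π * v))⁻¹ * f |x| := by
    ext x
    simp only [f, gaussianPDFReal, smul_eq_mul, sub_zero, pow_mul, sq_abs]
    ring_nf
  have hrpow : ((2 * v : ℝ)⁻¹) ^ (-((2 * k + 1 : ℝ) / 2)) = (2 * v) ^ k * √(2 * v) := by
    rw [inv_rpow (by positivity), ← rpow_neg (by positivity), neg_neg,
      show (2 * k + 1 : ℝ) / 2 = k + 1 / 2 by ring, rpow_add (by positivity), rpow_natCast,
      ← sqrt_eq_rpow]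
  rw [integral_gaussianReal_eq_integral_smul hv, heven, integral_const_mul, integral_comp_abs,
    integral_Ioi_pow_two_mul_mul_exp_neg_mul_sq (by positivity), Gamma_nat_add_half, hrpow,
    show (2 * π * v : ℝ) = (2 * v) * π by ring, sqrt_mul (by positivity), mul_pow]
  field_simp

theorem gaussian_tanh_moment_bound_general (a : ℝ) (ha : 0 < a) :
    ∫ v, v * Real.tanh (a * v) ∂(gaussianReal 0 1)
      ≤ (1 / a) * ∫ v, ((a * v) ^ 2 - (a * v) ^ 4 / 3 + 2 * (a * v) ^ 6 / 15) ∂(gaussianReal 0 1) ∧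
    (1 / a) * ∫ v, ((a * v) ^ 2 - (a * v) ^ 4 / 3 + 2 * (a * v) ^ 6 / 15) ∂(gaussianReal 0 1)
      = a - a ^ 3 + 2 * a ^ 5 := by
  have hexpand : (fun v : ℝ => (a * v) ^ 2 - (a * v) ^ 4 / 3 + 2 * (a * v) ^ 6 / 15) =
      fun v => a ^ 2 * v ^ (2 * 1) - a ^ 4 / 3 * v ^ (2 * 2) + 2 * a ^ 6 / 15 * v ^ (2 * 3) := by
    ext v; ring
  have hmonomial (n : ℕ) (c : ℝ) : Integrable (fun v : ℝ => c * v ^ n) (gaussianReal 0 1) :=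
    (integrable_pow_gaussianReal 0 1 n).const_mul c
  have hpoly_int : Integrable (fun v : ℝ => (a * v) ^ 2 - (a * v) ^ 4 / 3 + 2 * (a * v) ^ 6 / 15)
      (gaussianReal 0 1) := by
    rw [hexpand]
    exact ((hmonomial _ _).sub (hmonomial _ _)).add (hmonomial _ _)
  have hpoly : ∫ v, ((a * v) ^ 2 - (a * v) ^ 4 / 3 + 2 * (a * v) ^ 6 / 15) ∂(gaussianReal 0 1)
      = a ^ 2 - a ^ 4 + 2 * a ^ 6 := by
    rw [hexpand, integral_add, integral_sub (hmonomial _ _) (hmonomial _ _)]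
    · simp only [integral_const_mul, integral_pow_two_mul_gaussianReal]
      norm_num
    · exact (hmonomial _ _).sub (hmonomial _ _)
    · exact hmonomial _ _
  have hscale (v : ℝ) : v * tanh (a * v) = 1 / a * ((a * v) * tanh (a * v)) := by
    field_simp
  refine ⟨?_, by rw [hpoly]; field_simp⟩
  rw [← integral_const_mul]
  refine integral_mono_of_nonneg (ae_of_all _ fun v => ?_) (hpoly_int.const_mul _)
    (ae_of_all _ fun v => ?_) <;> beta_reduce
  · rw [Pi.zero_apply, hscale]
    exact mul_nonneg (by positivity) (mul_tanh_nonneg _)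
  · rw [hscale]
    exact mul_le_mul_of_nonneg_left (mul_tanh_le _) (by positivity)

theorem gaussian_tanh_moment_bound (σ : ℝ) (hσ : 0 < σ) (a : ℝ) (ha : 0 < a) :
    ∫ v, v * Real.tanh (a * v) ∂(gaussianReal 0 1)
      ≤ (1 / a) * ∫ v, ((a * v) ^ 2 - (a * v) ^ 4 / 3 + 2 * (a * v) ^ 6 / 15) ∂(gaussianReal 0 1) ∧
    (1 / a) * ∫ v, ((a * v) ^ 2 - (a * v) ^ 4 / 3 + 2 * (a * v) ^ 6 / 15) ∂(gaussianReal 0 1)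
      = a - a ^ 3 + 2 * a ^ 5 :=
  gaussian_tanh_moment_bound_general a ha
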